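/- The minimum of z·ỹ over ỹ ∈ Bias_{l,Δ}(y) equals z·y − T, where T is the sum of the l largest values among the negative potential impacts ρ_i^- = max(−z_i δ_i^l, −z_i δ_i^u) = max over d ∈ [δ_i^l, δ_i^u] of (−z_i d). -/

import Mathlib

/-!
Changing `y i` by `d ∈ [δl i, δu i]` changes `z ⬝ᵥ y` by `z i * d ≥ -ρ i`, where `ρ i` is the
negative potential impact, with equality at an endpoint; and `ρ i ≥ 0` because
`0 ∈ [δl i, δu i]`. Hence over the vectors supported on `S` the minimum is
`z ⬝ᵥ y - ∑ i ∈ S, ρ i`, and maximizing `∑ i ∈ S, ρ i` over `#S ≤ l` picks the `l` largest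
values: a sublist of a decreasingly sorted list of nonnegative numbers has sum at most that of
the prefix of (at least) the same length.
-/

open Matrix Set Finset

/-- The bias set: label vectors differing from `y` in at most `l` coordinates,
with per-coordinate difference in `[δl i, δu i]`. -/
def Bias {n : ℕ} (y δl δu : Fin n → ℝ) (l : ℕ) : Set (Fin n → ℝ) :=
  {y' | (∀ i, y' i - y i ∈ Set.Icc (δl i) (δu i)) ∧
        (Finset.univ.filter (fun i => y' i ≠ y i)).card ≤ l}

/-- Dot product of two vectors in `ℝ^n`. -/
def dotR {n : ℕ} (z v : Fin n → ℝ) : ℝ := ∑ i, z i * v i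

/-- Sum of the `l` largest entries of `ρ`. -/
noncomputable def topSum {n : ℕ} (ρ : Fin n → ℝ) (l : ℕ) : ℝ :=
  (((List.ofFn ρ).mergeSort (· ≥ ·)).take l).sum

theorem List.Sublist.sum_le_sum_take {M : Type*} [AddCommMonoid M] [PartialOrder M]
    [IsOrderedAddMonoid M] {L : List M} (hL : L.Pairwise (· ≥ ·)) (hL0 : ∀ x ∈ L, 0 ≤ x)
    {L' : List M} (h : L'.Sublist L) {k : ℕ} (hk : L'.length ≤ k) :
    L'.sum ≤ (L.take k).sum := by
  induction L generalizing L' k with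
  | nil => simp [List.sublist_nil.mp h]
  | cons a L ih =>
    rcases L' with _ | ⟨b, L''⟩
    · exact List.sum_nonneg fun x hx => hL0 x (List.mem_of_mem_take hx)
    rcases k with _ | k
    · simp at hk
    have hba : b ≤ a := by
      rcases List.mem_cons.mp (h.subset List.mem_cons_self) with rfl | hb
      · exact le_rfl
      · exact List.rel_of_pairwise_cons hL hb
    have htail := ih hL.of_cons (fun x hx => hL0 x (List.mem_cons_of_mem a hx)) h.tail
      (Nat.le_of_succ_le_succ hk)
    simpa using add_le_add hba htail

section TopSum

variable {n : ℕ} (ρ : Fin n → ℝ)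

noncomputable def sortedIndices : List (Fin n) :=
  (List.finRange n).mergeSort (fun i j => ρ i ≥ ρ j)

theorem map_sortedIndices :
    (sortedIndices ρ).map ρ = (List.ofFn ρ).mergeSort (· ≥ ·) := by
  rw [List.ofFn_eq_map]
  exact List.map_mergeSort fun _ _ _ _ => rfl

theorem sortedIndices_perm : (sortedIndices ρ).Perm (List.finRange n) :=
  List.mergeSort_perm _ _

theorem nodup_sortedIndices : (sortedIndices ρ).Nodup :=
  (sortedIndices_perm ρ).nodup_iff.mpr (List.nodup_finRange n)

theorem pairwise_map_sortedIndices : ((sortedIndices ρ).map ρ).Pairwise (· ≥ ·) := by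
  rw [map_sortedIndices]
  simpa using List.pairwise_mergeSort (le := fun a b : ℝ => a ≥ b)
    (fun a b c hab hbc => by simp only [decide_eq_true_eq] at *; exact hbc.trans hab)
    (fun a b => by simpa using le_total b a) (List.ofFn ρ)

theorem topSum_eq_sum_take (l : ℕ) :
    topSum ρ l = ∑ i ∈ ((sortedIndices ρ).take l).toFinset, ρ i := by
  rw [List.sum_toFinset _ ((nodup_sortedIndices ρ).sublist (List.take_sublist _ _)),
    List.map_take, map_sortedIndices]
  rfl

theorem sum_le_topSum (hρ : ∀ i, 0 ≤ ρ i) {S : Finset (Fin n)} {l : ℕ} (hS : #S ≤ l) :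
    ∑ i ∈ S, ρ i ≤ topSum ρ l := by
  set J := (sortedIndices ρ).filter (· ∈ S)
  have hJ : J.Nodup := (nodup_sortedIndices ρ).filter _
  have hJS : J.toFinset = S := by ext i; simp [J, (sortedIndices_perm ρ).mem_iff]
  calc ∑ i ∈ S, ρ i = (J.map ρ).sum := by rw [← hJS, List.sum_toFinset _ hJ]
    _ ≤ (((sortedIndices ρ).map ρ).take l).sum :=
      (List.filter_sublist.map ρ).sum_le_sum_take (pairwise_map_sortedIndices ρ) (by simp [hρ])
        (by rwa [List.length_map, ← List.toFinset_card_of_nodup hJ, hJS])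
    _ = topSum ρ l := by rw [map_sortedIndices]; rfl

theorem isGreatest_topSum (hρ : ∀ i, 0 ≤ ρ i) (l : ℕ) :
    IsGreatest ((fun S => ∑ i ∈ S, ρ i) '' {S | #S ≤ l}) (topSum ρ l) :=
  ⟨⟨_, (List.toFinset_card_le _).trans (List.length_take_le _ _), (topSum_eq_sum_take ρ l).symm⟩,
    by rintro _ ⟨S, hS, rfl⟩; exact sum_le_topSum ρ hρ hS⟩

end TopSum

theorem isGreatest_mul_image_Icc {R : Type*} [Ring R] [LinearOrder R] [IsStrictOrderedRing R]
    {a b : R} (hab : a ≤ b) (c : R) :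
    IsGreatest ((c * ·) '' Icc a b) (max (c * a) (c * b)) := by
  refine ⟨?_, ?_⟩
  · rcases le_total (c * a) (c * b) with h | h
    · rw [max_eq_right h]
      exact ⟨b, right_mem_Icc.2 hab, rfl⟩
    · rw [max_eq_left h]
      exact ⟨a, left_mem_Icc.2 hab, rfl⟩
  · rintro _ ⟨d, ⟨had, hdb⟩, rfl⟩
    rcases le_total 0 c with hc | hc
    · exact le_max_of_le_right (mul_le_mul_of_nonneg_left hdb hc)
    · exact le_max_of_le_left (mul_le_mul_of_nonpos_left had hc)

section Bias

variable {n : ℕ}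

theorem dotR_sub_eq_sum_filter_ne (z y y' : Fin n → ℝ) :
    dotR z y' - dotR z y = ∑ i with y' i ≠ y i, z i * (y' i - y i) := by
  rw [Finset.sum_filter_of_ne fun i _ h => by rintro heq; simp [heq] at h]
  simp only [dotR, mul_sub, Finset.sum_sub_distrib]

theorem dotR_add_ite (z y d : Fin n → ℝ) (S : Finset (Fin n)) :
    dotR z (y + fun i => if i ∈ S then d i else 0) = dotR z y + ∑ i ∈ S, z i * d i := by
  simp [dotR, mul_add, Finset.sum_add_distrib, mul_ite, Finset.sum_ite_mem]

theorem add_ite_mem_Bias {y δl δu d : Fin n → ℝ} {S : Finset (Fin n)} {l : ℕ}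
    (h0 : ∀ i, 0 ∈ Icc (δl i) (δu i)) (hd : ∀ i, d i ∈ Icc (δl i) (δu i)) (hS : #S ≤ l) :
    (y + fun i => if i ∈ S then d i else 0) ∈ Bias y δl δu l := by
  refine ⟨fun i => ?_, (card_le_card fun i hi => ?_).trans hS⟩
  · by_cases hi : i ∈ S <;> simp [hi, hd i, h0 i]
  · by_contra h
    simp [h] at hi

end Bias

theorem stmt4_general {n : ℕ} (z y δl δu : Fin n → ℝ)
    (hl : ∀ i, δl i ≤ 0) (hu : ∀ i, 0 ≤ δu i) (l : ℕ) :
    IsLeast ((fun y' => dotR z y') '' Bias y δl δu l)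
      (dotR z y - topSum (fun i => max (-(z i) * δl i) (-(z i) * δu i)) l) := by
  set ρ : Fin n → ℝ := fun i => max (-(z i) * δl i) (-(z i) * δu i)
  have hρ i : IsGreatest ((-(z i) * ·) '' Icc (δl i) (δu i)) (ρ i) :=
    isGreatest_mul_image_Icc ((hl i).trans (hu i)) _
  have hρ0 i : 0 ≤ ρ i := by simpa using (hρ i).2 ⟨0, ⟨hl i, hu i⟩, rfl⟩
  constructor
  · obtain ⟨S, hS, hSρ⟩ := (isGreatest_topSum ρ hρ0 l).1
    choose d hd hdρ using fun i => (hρ i).1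
    refine ⟨_, add_ite_mem_Bias (fun i => ⟨hl i, hu i⟩) hd hS, ?_⟩
    simp only [dotR_add_ite, ← hSρ, ← hdρ, neg_mul, Finset.sum_neg_distrib, sub_neg_eq_add]
  · rintro _ ⟨y', ⟨hy'Icc, hy'card⟩, rfl⟩
    have hsupp := (isGreatest_topSum ρ hρ0 l).2 ⟨_, hy'card, rfl⟩
    have hcoord : ∑ i with y' i ≠ y i, -(z i) * (y' i - y i) ≤ ∑ i with y' i ≠ y i, ρ i :=
      Finset.sum_le_sum fun i _ => (hρ i).2 ⟨_, hy'Icc i, rfl⟩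
    have hdiff := dotR_sub_eq_sum_filter_ne z y y'
    simp only [neg_mul, Finset.sum_neg_distrib] at hcoord
    simp only at hsupp ⊢
    linarith

/-- The minimum of `z·ỹ` over the bias set equals `z·y` minus the sum of the
`l` largest negative potential impacts `ρ⁻ i = max (-(z i) * δl i) (-(z i) * δu i)`. -/
theorem stmt4 {n : ℕ} (z y δl δu : Fin n → ℝ)
    (hl : ∀ i, δl i ≤ 0) (hu : ∀ i, 0 ≤ δu i) (l : ℕ) (hln : l ≤ n) :
    IsLeast ((fun y' => dotR z y') '' Bias y δl δu l)
      (dotR z y - topSum (fun i => max (-(z i) * δl i) (-(z i) * δu i)) l) :=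
  stmt4_general z y δl δu hl hu l
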